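/- arXiv:2306.13360 — 2 statements merged into one kernel-verified Lean document; each statement's English description precedes it below -/
import Mathlib

section
/- Let C be a closed cone in a finite-dimensional real inner product space and Y a point. Then Ŷ ∈ C minimizes ‖Z − Y‖² over Z ∈ C if and only if Ŷ maximizes ‖Z‖ over the set {Z ∈ C : ⟨Y, Z⟩ = ‖Z‖²}. -/
/-!
Let `P = (⟪Y, Z⟫ / ‖Z‖²) • Z` be the projection of `Y` onto the line through `Z`. Then
`⟪Y, P⟫ = ‖P‖²`, Pythagoras gives `‖Z - Y‖² = ‖P - Y‖² + ‖Z - P‖²`, and `P` lies in the cone as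
soon as `⟪Y, Z⟫ ≥ 0`. Hence a nearest point `Ŷ` is its own projection, i.e. `⟪Y, Ŷ⟫ = ‖Ŷ‖²`; and on
that constraint set `‖Z - Y‖² = ‖Y‖² - ‖Z‖²`, so being nearest is having the largest norm.
Conversely each `Z` in the cone is no nearer to `Y` than its projection, which satisfies the
constraint, or, when `⟪Y, Z⟫ ≤ 0`, than `0`.
-/

open RealInnerProductSpace

section

variable {H : Type*} [NormedAddCommGroup H] [InnerProductSpace ℝ H]

-- `0 / 0 = 0` makes `lineProj Y 0 = 0`, the projection onto the degenerate line `{0}`.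
noncomputable def lineProj (Y Z : H) : H := (⟪Y, Z⟫ / ‖Z‖ ^ 2) • Z

lemma inner_div_norm_sq_mul_norm_sq (Y Z : H) : ⟪Y, Z⟫ / ‖Z‖ ^ 2 * ‖Z‖ ^ 2 = ⟪Y, Z⟫ :=
  div_mul_cancel_of_imp fun h => by simp [norm_eq_zero.mp (pow_eq_zero_iff two_ne_zero |>.mp h)]

lemma inner_lineProj (Y Z : H) : ⟪Y, lineProj Y Z⟫ = ‖lineProj Y Z‖ ^ 2 := by
  have ht := inner_div_norm_sq_mul_norm_sq Y Z
  rw [lineProj]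
  generalize ⟪Y, Z⟫ / ‖Z‖ ^ 2 = t at ht ⊢
  rw [real_inner_smul_right, norm_smul, mul_pow, Real.norm_eq_abs, sq_abs]
  linear_combination -t * ht

lemma norm_sub_sq_eq_norm_lineProj_sub_sq_add (Y Z : H) :
    ‖Z - Y‖ ^ 2 = ‖lineProj Y Z - Y‖ ^ 2 + ‖Z - lineProj Y Z‖ ^ 2 := by
  have horth : ⟪Z - lineProj Y Z, lineProj Y Z - Y⟫ = 0 := by
    have ht := inner_div_norm_sq_mul_norm_sq Y Z
    rw [lineProj]
    generalize ⟪Y, Z⟫ / ‖Z‖ ^ 2 = t at ht ⊢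
    simp only [inner_sub_left, inner_sub_right, real_inner_smul_left, real_inner_smul_right,
      real_inner_comm Y Z, real_inner_self_eq_norm_sq, norm_smul, mul_pow, Real.norm_eq_abs,
      sq_abs]
    linear_combination (1 - t) * ht
  rw [← sub_add_sub_cancel Z (lineProj Y Z) Y, norm_add_sq_real, horth]
  ring

lemma lineProj_eq_of_norm_sub_sq_le {Y Z : H}
    (h : ‖Z - Y‖ ^ 2 ≤ ‖lineProj Y Z - Y‖ ^ 2) : lineProj Y Z = Z := by
  rw [norm_sub_sq_eq_norm_lineProj_sub_sq_add Y Z] at h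
  have hsq : ‖Z - lineProj Y Z‖ ^ 2 = 0 := le_antisymm (by linarith) (sq_nonneg _)
  exact (norm_sub_eq_zero_iff.mp (pow_eq_zero_iff two_ne_zero |>.mp hsq)).symm

lemma lineProj_mem {C : Set H} (hcone : ∀ t : ℝ, 0 ≤ t → ∀ z ∈ C, t • z ∈ C) {Y Z : H}
    (hZ : Z ∈ C) (h : 0 ≤ ⟪Y, Z⟫) : lineProj Y Z ∈ C :=
  hcone _ (div_nonneg h (sq_nonneg _)) Z hZ

lemma norm_sub_sq_eq_of_inner_eq_norm_sq {Y Z : H} (h : ⟪Y, Z⟫ = ‖Z‖ ^ 2) :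
    ‖Z - Y‖ ^ 2 = ‖Y‖ ^ 2 - ‖Z‖ ^ 2 := by
  rw [norm_sub_sq_real, real_inner_comm, h]
  ring

end

theorem proj_closed_cone_max_reformulation_general {H : Type*} [NormedAddCommGroup H]
    [InnerProductSpace ℝ H] (C : Set H)
    (hzero : (0 : H) ∈ C)
    (hcone : ∀ t : ℝ, 0 ≤ t → ∀ z ∈ C, t • z ∈ C) (Y Yhat : H) :
    (Yhat ∈ C ∧ ∀ Z ∈ C, ‖Yhat - Y‖ ^ 2 ≤ ‖Z - Y‖ ^ 2) ↔
      (Yhat ∈ C ∧ (inner ℝ Y Yhat : ℝ) = ‖Yhat‖ ^ 2 ∧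
        ∀ Z ∈ C, (inner ℝ Y Z : ℝ) = ‖Z‖ ^ 2 → ‖Z‖ ≤ ‖Yhat‖) := by
  constructor
  · rintro ⟨hmem, hmin⟩
    have hinner_nonneg : 0 ≤ ⟪Y, Yhat⟫ := by
      have h := hmin 0 hzero
      rw [norm_sub_sq_real, zero_sub, norm_neg, real_inner_comm] at h
      linarith [sq_nonneg ‖Yhat‖]
    have hfix := lineProj_eq_of_norm_sub_sq_le (hmin _ (lineProj_mem hcone hmem hinner_nonneg))
    have hYhat : ⟪Y, Yhat⟫ = ‖Yhat‖ ^ 2 := hfix ▸ inner_lineProj Y Yhat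
    refine ⟨hmem, hYhat, fun Z hZ hZY => ?_⟩
    have h := hmin Z hZ
    rw [norm_sub_sq_eq_of_inner_eq_norm_sq hYhat, norm_sub_sq_eq_of_inner_eq_norm_sq hZY] at h
    exact (pow_le_pow_iff_left₀ (norm_nonneg _) (norm_nonneg _) two_ne_zero).mp (by linarith)
  · rintro ⟨hmem, hYhat, hmax⟩
    refine ⟨hmem, fun Z hZ => ?_⟩
    rw [norm_sub_sq_eq_of_inner_eq_norm_sq hYhat]
    rcases le_or_gt ⟪Y, Z⟫ 0 with hnonpos | hpos
    · rw [norm_sub_sq_real, real_inner_comm]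
      linarith [sq_nonneg ‖Z‖, sq_nonneg ‖Yhat‖]
    · have hP := hmax _ (lineProj_mem hcone hZ hpos.le) (inner_lineProj Y Z)
      rw [norm_sub_sq_eq_norm_lineProj_sub_sq_add Y Z,
        norm_sub_sq_eq_of_inner_eq_norm_sq (inner_lineProj Y Z)]
      linarith [pow_le_pow_left₀ (norm_nonneg _) hP 2, sq_nonneg ‖Z - lineProj Y Z‖]

/-- Reformulation of the projection onto a closed cone: `Ŷ ∈ C` minimizes `‖Z − Y‖²`
over `Z ∈ C` if and only if `Ŷ` maximizes `‖Z‖` over `{Z ∈ C : ⟨Y, Z⟩ = ‖Z‖²}`. -/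
theorem proj_closed_cone_max_reformulation {H : Type*} [NormedAddCommGroup H]
    [InnerProductSpace ℝ H] [FiniteDimensional ℝ H] (C : Set H)
    (hne : C.Nonempty) (hclosed : IsClosed C) (hzero : (0 : H) ∈ C)
    (hcone : ∀ t : ℝ, 0 ≤ t → ∀ z ∈ C, t • z ∈ C) (Y Yhat : H) :
    (Yhat ∈ C ∧ ∀ Z ∈ C, ‖Yhat - Y‖ ^ 2 ≤ ‖Z - Y‖ ^ 2) ↔
      (Yhat ∈ C ∧ (inner ℝ Y Yhat : ℝ) = ‖Yhat‖ ^ 2 ∧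
        ∀ Z ∈ C, (inner ℝ Y Z : ℝ) = ‖Z‖ ^ 2 → ‖Z‖ ≤ ‖Yhat‖) :=
  proj_closed_cone_max_reformulation_general C hzero hcone Y Yhat
end

section
/- Let Û be the n × s matrix of top s left singular vectors of an n × m real matrix A of rank r > s. Then ÛÛᵀA is a best Frobenius-norm approximation of A among all n × m matrices of rank at most s; that is, ‖A − ÛÛᵀA‖ ≤ ‖A − B‖ for every B of rank ≤ s. -/
open Matrix

/-- The Frobenius (trace) inner product on real matrices. -/
noncomputable def frobInner {n m : ℕ} (A B : Matrix (Fin n) (Fin m) ℝ) : ℝ :=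
  ∑ i, ∑ j, A i j * B i j

/-- The squared Frobenius norm. -/
noncomputable def frobSq {n m : ℕ} (A : Matrix (Fin n) (Fin m) ℝ) : ℝ := frobInner A A

/-- The Frobenius norm. -/
noncomputable def frobNorm {n m : ℕ} (A : Matrix (Fin n) (Fin m) ℝ) : ℝ :=
  Real.sqrt (frobSq A)

/-- The `n × m` rectangular diagonal matrix with diagonal entries `σ`. -/
noncomputable def svdS {n m : ℕ} (σ : Fin (min n m) → ℝ) : Matrix (Fin n) (Fin m) ℝ :=
  Matrix.of fun i j =>
    if h : (i : ℕ) = (j : ℕ) then σ ⟨i, by have := i.isLt; have := j.isLt; omega⟩ else 0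

/-!
Write `A = U S Vᵀ` and let `d = padSq σ n` be the squared singular values padded with zeros, the
diagonal of `S Sᵀ`. For every orthogonal projection `Q`, `‖Q A‖² = ∑ᵢ wᵢ dᵢ` with weights
`wᵢ = (Uᵀ Q U)ᵢᵢ ∈ [0, 1]` summing to `tr Q`. For `Q = 1 - ÛÛᵀ` the weights are the indicator
of `i ≥ s`. For `B` of rank at most `s`, let `Q` project onto the orthogonal complement of the
column space of `B`: then `‖A - B‖ ≥ ‖Q (A - B)‖ = ‖Q A‖` and `tr Q ≥ n - s`. As `d` is
antitone, among weights in `[0, 1]` of total mass at least `n - s` the indicator of the last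
`n - s` indices minimises `∑ᵢ wᵢ dᵢ`.
-/

open Finset

theorem Matrix.exists_isSymm_isIdempotentElem_trace_eq_rank_mul_eq {n m : Type*} [Fintype n]
    [DecidableEq n] [Fintype m] [DecidableEq m] (N : Matrix n m ℝ) :
    ∃ P : Matrix n n ℝ, P.IsSymm ∧ IsIdempotentElem P ∧ P.trace = N.rank ∧ P * N = N := by
  set K := LinearMap.range (toEuclideanLin N)
  set P := (toEuclideanCLM (𝕜 := ℝ)).symm K.starProjection
  have hP : toEuclideanCLM (𝕜 := ℝ) P = K.starProjection := by simp [P]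
  have hPlin : toEuclideanLin P = K.starProjection := by
    rw [← coe_toEuclideanCLM_eq_toEuclideanLin, hP]
  refine ⟨P, ?_, K.isIdempotentElem_starProjection.map _, ?_, ?_⟩
  · have hstar : toEuclideanCLM (𝕜 := ℝ) (star P) = toEuclideanCLM (𝕜 := ℝ) P := by
      rw [map_star, hP, (isSelfAdjoint_starProjection K).star_eq]
    rw [IsSymm, ← conjTranspose_eq_transpose_of_trivial, ← star_eq_conjTranspose]
    exact (toEuclideanCLM (n := n) (𝕜 := ℝ)).injective hstar
  · have hproj : LinearMap.IsProj K (toEuclideanLin P) := hPlin ▸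
      ⟨fun x => K.starProjection_apply_mem x, fun x hx => K.starProjection_eq_self_iff.mpr hx⟩
    rw [← trace_toLin_eq P (EuclideanSpace.basisFun n ℝ).toBasis,
      ← toEuclideanLin_eq_toLin_orthonormal, hproj.trace,
      rank_eq_finrank_range_toLin N (EuclideanSpace.basisFun n ℝ).toBasis
        (EuclideanSpace.basisFun m ℝ).toBasis, ← toEuclideanLin_eq_toLin_orthonormal]
  · apply toEuclideanLin.injective
    rw [toEuclideanLin_eq_toLin_orthonormal, toLin_mul _ (EuclideanSpace.basisFun n ℝ).toBasis,
      ← toEuclideanLin_eq_toLin_orthonormal, ← toEuclideanLin_eq_toLin_orthonormal, hPlin]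
    ext x : 1
    exact K.starProjection_eq_self_iff.mpr (LinearMap.mem_range_self _ x)

theorem Matrix.transpose_mul_mul_self_of_isSymm {R n m : Type*} [CommSemiring R] [Fintype n]
    {Q : Matrix n n R} (hQ : Q.IsSymm) (hQQ : IsIdempotentElem Q) (X : Matrix n m R) :
    (Q * X)ᵀ * (Q * X) = Xᵀ * Q * X := by
  rw [transpose_mul, hQ.eq, Matrix.mul_assoc, ← Matrix.mul_assoc Q, hQQ.eq, Matrix.mul_assoc]

theorem Matrix.diag_transpose_mul_self_nonneg {n m : Type*} [Fintype n] (X : Matrix n m ℝ)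
    (i : m) : 0 ≤ (Xᵀ * X) i i :=
  sum_nonneg fun k _ => mul_self_nonneg (X k i)

theorem Matrix.diag_transpose_mul_mul_mem_Icc {n : Type*} [Fintype n] [DecidableEq n]
    {U Q : Matrix n n ℝ} (hU : Uᵀ * U = 1) (hQ : Q.IsSymm) (hQQ : IsIdempotentElem Q) (i : n) :
    (Uᵀ * Q * U) i i ∈ Set.Icc 0 1 := by
  have hcompl := diag_transpose_mul_self_nonneg ((1 - Q) * U) i
  rw [transpose_mul_mul_self_of_isSymm (isSymm_one.sub hQ) hQQ.one_sub, Matrix.mul_sub,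
    Matrix.sub_mul, Matrix.mul_one, hU, Matrix.sub_apply, one_apply_eq] at hcompl
  have hdiag := diag_transpose_mul_self_nonneg (Q * U) i
  rw [transpose_mul_mul_self_of_isSymm hQ hQQ] at hdiag
  exact ⟨hdiag, by linarith⟩

theorem frobSq_eq_trace {n m : ℕ} (A : Matrix (Fin n) (Fin m) ℝ) :
    frobSq A = (Aᵀ * A).trace := by
  rw [frobSq, frobInner, trace, sum_comm]
  rfl

theorem frobSq_nonneg {n m : ℕ} (A : Matrix (Fin n) (Fin m) ℝ) : 0 ≤ frobSq A := by
  unfold frobSq frobInner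
  exact sum_nonneg fun i _ => sum_nonneg fun j _ => mul_self_nonneg (A i j)

theorem frobSq_mul_of_mul_transpose_eq_one {n m : ℕ} {V : Matrix (Fin m) (Fin m) ℝ}
    (hV : V * Vᵀ = 1) (M : Matrix (Fin n) (Fin m) ℝ) : frobSq (M * V) = frobSq M := by
  rw [frobSq_eq_trace, frobSq_eq_trace, transpose_mul, Matrix.mul_assoc, trace_mul_comm,
    Matrix.mul_assoc, Matrix.mul_assoc M, hV, Matrix.mul_one]

theorem frobSq_mul_le {n m : ℕ} {Q : Matrix (Fin n) (Fin n) ℝ} (hQ : Q.IsSymm)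
    (hQQ : IsIdempotentElem Q) (X : Matrix (Fin n) (Fin m) ℝ) : frobSq (Q * X) ≤ frobSq X := by
  have hcompl := frobSq_nonneg ((1 - Q) * X)
  rw [frobSq_eq_trace, transpose_mul_mul_self_of_isSymm (isSymm_one.sub hQ) hQQ.one_sub,
    Matrix.mul_sub, Matrix.sub_mul, Matrix.mul_one, trace_sub] at hcompl
  rw [frobSq_eq_trace, frobSq_eq_trace, transpose_mul_mul_self_of_isSymm hQ hQQ]
  linarith

noncomputable def padSq {k : ℕ} (σ : Fin k → ℝ) (n : ℕ) : Fin n → ℝ :=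
  fun i => if h : (i : ℕ) < k then σ ⟨i, h⟩ ^ 2 else 0

theorem padSq_nonneg {k n : ℕ} (σ : Fin k → ℝ) (i : Fin n) : 0 ≤ padSq σ n i := by
  unfold padSq
  split_ifs <;> positivity

theorem antitone_padSq {k n : ℕ} {σ : Fin k → ℝ} (hσ : Antitone σ) (hσ0 : ∀ i, 0 ≤ σ i) :
    Antitone (padSq σ n) := by
  intro i j hij
  by_cases hj : (j : ℕ) < k
  · have hi : (i : ℕ) < k := lt_of_le_of_lt hij hj
    simp only [padSq, dif_pos hi, dif_pos hj]
    exact pow_le_pow_left₀ (hσ0 _) (hσ (Fin.mk_le_mk.mpr hij)) 2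
  · simp only [padSq, dif_neg hj]
    exact padSq_nonneg σ i

theorem svdS_mul_transpose {n m : ℕ} (σ : Fin (min n m) → ℝ) :
    svdS σ * (svdS σ)ᵀ = diagonal (padSq σ n) := by
  ext i i'
  rw [mul_apply, diagonal_apply]
  by_cases him : (i : ℕ) < min n m
  · rw [sum_eq_single ⟨i, lt_of_lt_of_le him (min_le_right n m)⟩]
    · by_cases hii : i = i'
      · subst hii
        simp [svdS, padSq, him, sq]
      · have : (i' : ℕ) ≠ i := fun h => hii (Fin.ext h.symm)
        simp [svdS, hii, this]
    · intro j _ hj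
      have : (i : ℕ) ≠ j := fun h => hj (Fin.ext h.symm)
      simp [svdS, this]
    · simp
  · refine (sum_eq_zero fun j _ => ?_).trans ?_
    · have : (i : ℕ) ≠ j := by omega
      simp [svdS, this]
    · split_ifs with hii
      · subst hii
        simp [padSq, him]
      · rfl

theorem frobSq_mul_svdS {n m : ℕ} (M : Matrix (Fin n) (Fin n) ℝ) (σ : Fin (min n m) → ℝ) :
    frobSq (M * svdS σ) = ∑ i, (Mᵀ * M) i i * padSq σ n i := by
  rw [frobSq_eq_trace, transpose_mul, Matrix.mul_assoc, trace_mul_comm, Matrix.mul_assoc,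
    Matrix.mul_assoc M, svdS_mul_transpose, ← Matrix.mul_assoc]
  simp [trace, mul_diagonal]

theorem frobSq_mul_svd {n m : ℕ} {U Q : Matrix (Fin n) (Fin n) ℝ} {V : Matrix (Fin m) (Fin m) ℝ}
    (σ : Fin (min n m) → ℝ) (hV : Vᵀ * V = 1) (hQ : Q.IsSymm) (hQQ : IsIdempotentElem Q) :
    frobSq (Q * (U * svdS σ * Vᵀ)) = ∑ i, (Uᵀ * Q * U) i i * padSq σ n i := by
  rw [← Matrix.mul_assoc, ← Matrix.mul_assoc,
    frobSq_mul_of_mul_transpose_eq_one (by rwa [transpose_transpose]), frobSq_mul_svdS,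
    transpose_mul_mul_self_of_isSymm hQ hQQ]

theorem sum_ite_lt_mul_le_sum_mul_of_antitone {n s : ℕ} {d w : Fin n → ℝ} (hd : Antitone d)
    (hd0 : ∀ i, 0 ≤ d i) (hw : ∀ i, w i ∈ Set.Icc 0 1) (hsum : ((n - s : ℕ) : ℝ) ≤ ∑ i, w i) :
    ∑ i : Fin n, (if (i : ℕ) < s then 0 else 1) * d i ≤ ∑ i, w i * d i := by
  set e : Fin n → ℝ := fun i => if (i : ℕ) < s then 0 else 1
  set t : ℝ := if h : s < n then d ⟨s, h⟩ else 0
  have ht : 0 ≤ t := by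
    unfold t
    split_ifs <;> simp [hd0]
  have he : ∑ i, e i = (n - s : ℕ) := by
    have h := card_filter_add_card_filter_not (s := (univ : Finset (Fin n)))
      (fun i : Fin n => (i : ℕ) < s)
    rw [Fin.card_filter_val_lt, card_univ, Fintype.card_fin] at h
    rw [sum_ite, sum_const_zero, zero_add, sum_const, nsmul_one]
    congr 1
    omega
  -- `t` separates the values of `d` on the first `s` indices from those on the rest
  have hterm : ∀ i, e i * d i ≤ w i * d i + t * (e i - w i) := by
    intro i
    obtain ⟨hw0, hw1⟩ := hw i
    by_cases hi : (i : ℕ) < s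
    · have hdt : t ≤ d i := by
        unfold t
        split_ifs
        · exact hd (Fin.mk_le_mk.mpr hi.le)
        · exact hd0 i
      simp only [e, if_pos hi]
      nlinarith
    · have hs : s < n := by omega
      have hdt : d i ≤ t := by
        simp only [t, dif_pos hs]
        exact hd (Fin.mk_le_mk.mpr (by omega))
      simp only [e, if_neg hi]
      nlinarith
  calc ∑ i, e i * d i ≤ ∑ i, (w i * d i + t * (e i - w i)) := sum_le_sum fun i _ => hterm i
    _ = ∑ i, w i * d i + t * (∑ i, e i - ∑ i, w i) := by
      rw [sum_add_distrib, ← mul_sum, sum_sub_distrib]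
    _ ≤ ∑ i, w i * d i := by
      have : t * (∑ i, e i - ∑ i, w i) ≤ 0 := mul_nonpos_of_nonneg_of_nonpos ht (by linarith)
      linarith

section Truncation

variable {n s : ℕ} {U : Matrix (Fin n) (Fin n) ℝ}

theorem Matrix.transpose_mul_submatrix_castLE (hU : Uᵀ * U = 1) (h : s ≤ n) :
    Uᵀ * U.submatrix id (Fin.castLE h) =
      (1 : Matrix (Fin n) (Fin n) ℝ).submatrix id (Fin.castLE h) := by
  rw [← hU]
  rfl

theorem Matrix.submatrix_castLE_transpose_mul_self (hU : Uᵀ * U = 1) (h : s ≤ n) :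
    (U.submatrix id (Fin.castLE h))ᵀ * U.submatrix id (Fin.castLE h) = 1 := by
  rw [transpose_submatrix]
  change (Uᵀ * U.submatrix id (Fin.castLE h)).submatrix (Fin.castLE h) id = 1
  rw [transpose_mul_submatrix_castLE hU, submatrix_submatrix]
  exact submatrix_one _ (Fin.castLE_injective h)

theorem Matrix.one_submatrix_castLE_mul_transpose_apply_self (h : s ≤ n) (i : Fin n) :
    ((1 : Matrix (Fin n) (Fin n) ℝ).submatrix id (Fin.castLE h) *
      ((1 : Matrix (Fin n) (Fin n) ℝ).submatrix id (Fin.castLE h))ᵀ) i i =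
        if (i : ℕ) < s then 1 else 0 := by
  rw [mul_apply]
  split_ifs with hi
  · rw [sum_eq_single ⟨i, hi⟩ (fun k _ hk => ?_) (by simp)]
    · simp [one_apply]
    · have : (i : ℕ) ≠ k := fun hik => hk (Fin.ext hik.symm)
      simp [Fin.ext_iff, this]
  · refine sum_eq_zero fun k _ => ?_
    have : (i : ℕ) ≠ k := by omega
    simp [Fin.ext_iff, this]

end Truncation

theorem frobSq_sub_truncation {n m s : ℕ} (hsn : s ≤ n) {A : Matrix (Fin n) (Fin m) ℝ}
    {U : Matrix (Fin n) (Fin n) ℝ} {V : Matrix (Fin m) (Fin m) ℝ} {σ : Fin (min n m) → ℝ}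
    (hU : Uᵀ * U = 1) (hV : Vᵀ * V = 1) (hA : A = U * svdS σ * Vᵀ) :
    frobSq (A - U.submatrix id (Fin.castLE hsn) * (U.submatrix id (Fin.castLE hsn))ᵀ * A) =
      ∑ i : Fin n, (if (i : ℕ) < s then 0 else 1) * padSq σ n i := by
  set Û := U.submatrix id (Fin.castLE hsn)
  have hQ : (1 - Û * Ûᵀ).IsSymm :=
    isSymm_one.sub (by rw [IsSymm, transpose_mul, transpose_transpose])
  have hQQ : IsIdempotentElem (1 - Û * Ûᵀ) := IsIdempotentElem.one_sub <| by
    rw [IsIdempotentElem, Matrix.mul_assoc, ← Matrix.mul_assoc Ûᵀ,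
      submatrix_castLE_transpose_mul_self hU hsn, Matrix.one_mul]
  rw [show A - Û * Ûᵀ * A = (1 - Û * Ûᵀ) * A by rw [Matrix.sub_mul, Matrix.one_mul], hA,
    frobSq_mul_svd σ hV hQ hQQ]
  refine sum_congr rfl fun i _ => ?_
  have hUÛ : Uᵀ * (Û * Ûᵀ) * U = (Uᵀ * Û) * (Uᵀ * Û)ᵀ := by
    rw [transpose_mul, transpose_transpose]
    simp only [Matrix.mul_assoc]
  rw [Matrix.mul_sub, Matrix.sub_mul, Matrix.mul_one, hU, hUÛ, transpose_mul_submatrix_castLE hU,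
    Matrix.sub_apply, one_apply_eq, one_submatrix_castLE_mul_transpose_apply_self]
  split_ifs <;> ring

theorem exists_weights_le_frobSq_sub {n m s : ℕ} {A B : Matrix (Fin n) (Fin m) ℝ}
    {U : Matrix (Fin n) (Fin n) ℝ} {V : Matrix (Fin m) (Fin m) ℝ} {σ : Fin (min n m) → ℝ}
    (hU : Uᵀ * U = 1) (hV : Vᵀ * V = 1) (hA : A = U * svdS σ * Vᵀ) (hB : B.rank ≤ s) :
    ∃ w : Fin n → ℝ, (∀ i, w i ∈ Set.Icc 0 1) ∧ ((n - s : ℕ) : ℝ) ≤ ∑ i, w i ∧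
      ∑ i, w i * padSq σ n i ≤ frobSq (A - B) := by
  obtain ⟨P, hP, hPP, htr, hPB⟩ := exists_isSymm_isIdempotentElem_trace_eq_rank_mul_eq B
  have hQ : (1 - P).IsSymm := isSymm_one.sub hP
  have hQB : (1 - P) * B = 0 := by rw [Matrix.sub_mul, Matrix.one_mul, hPB, sub_self]
  refine ⟨fun i => (Uᵀ * (1 - P) * U) i i,
    fun i => diag_transpose_mul_mul_mem_Icc hU hQ hPP.one_sub i, ?_, ?_⟩
  · have htrace : ∑ i, (Uᵀ * (1 - P) * U) i i = n - B.rank := by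
      change (Uᵀ * (1 - P) * U).trace = _
      rw [trace_mul_cycle, mul_eq_one_comm.mp hU, Matrix.one_mul, trace_sub, trace_one,
        htr, Fintype.card_fin]
    rw [htrace, ← Nat.cast_sub B.rank_le_height]
    exact_mod_cast Nat.sub_le_sub_left hB n
  · calc ∑ i, (Uᵀ * (1 - P) * U) i i * padSq σ n i = frobSq ((1 - P) * (A - B)) := by
          rw [Matrix.mul_sub (1 - P) A B, hQB, sub_zero, hA, frobSq_mul_svd σ hV hQ hPP.one_sub]
      _ ≤ frobSq (A - B) := frobSq_mul_le hQ hPP.one_sub _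

theorem eckart_young_frobenius_general {n m s : ℕ} (hsn : s ≤ n)
    (A : Matrix (Fin n) (Fin m) ℝ)
    (U₀ : Matrix (Fin n) (Fin n) ℝ) (V₀ : Matrix (Fin m) (Fin m) ℝ)
    (σ : Fin (min n m) → ℝ) (hU₀ : U₀ᵀ * U₀ = 1) (hV₀ : V₀ᵀ * V₀ = 1)
    (hmono : Antitone σ) (hnn : ∀ i, 0 ≤ σ i) (hA : A = U₀ * svdS σ * V₀ᵀ) :
    ∀ B : Matrix (Fin n) (Fin m) ℝ, B.rank ≤ s →
      frobNorm (A - (U₀.submatrix id (Fin.castLE hsn)) * (U₀.submatrix id (Fin.castLE hsn))ᵀ * A) ≤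
        frobNorm (A - B) := by
  intro B hB
  obtain ⟨w, hw, hsum, hle⟩ := exists_weights_le_frobSq_sub hU₀ hV₀ hA hB
  refine Real.sqrt_le_sqrt ?_
  rw [frobSq_sub_truncation hsn hU₀ hV₀ hA]
  exact (sum_ite_lt_mul_le_sum_mul_of_antitone (antitone_padSq hmono hnn) (padSq_nonneg σ) hw
    hsum).trans hle

/-- Eckart–Young (Frobenius norm): if `Û` is the matrix of top `s` left singular
vectors of `A ∈ ℝ^{n×m}` of rank `r > s`, then `ÛÛᵀA` is a best rank-`≤ s`
approximation of `A`: `‖A − ÛÛᵀA‖ ≤ ‖A − B‖` for every `B` with `rank B ≤ s`. -/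
theorem eckart_young_frobenius {n m s r : ℕ} (hsr : s < r) (hsn : s ≤ n)
    (A : Matrix (Fin n) (Fin m) ℝ) (hrank : A.rank = r)
    (U₀ : Matrix (Fin n) (Fin n) ℝ) (V₀ : Matrix (Fin m) (Fin m) ℝ)
    (σ : Fin (min n m) → ℝ) (hU₀ : U₀ᵀ * U₀ = 1) (hV₀ : V₀ᵀ * V₀ = 1)
    (hmono : Antitone σ) (hnn : ∀ i, 0 ≤ σ i) (hA : A = U₀ * svdS σ * V₀ᵀ) :
    ∀ B : Matrix (Fin n) (Fin m) ℝ, B.rank ≤ s →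
      frobNorm (A - (U₀.submatrix id (Fin.castLE hsn)) * (U₀.submatrix id (Fin.castLE hsn))ᵀ * A) ≤
        frobNorm (A - B) :=
  eckart_young_frobenius_general hsn A U₀ V₀ σ hU₀ hV₀ hmono hnn hA
end
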